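/- For fixed r > 0, σ > 0, K > 0, the market exercise threshold λ ↦ b*(λ) = 2rK/(2(r+λ) + σ²) is strictly decreasing in λ on [0, ∞), and for each fixed s > 0 the perpetual defaultable put price λ ↦ P(s; λ) is nondecreasing in λ on [0, ∞). -/

import Mathlib

/-!
Let `V(λ, b)` be the value of the policy "exercise when the price first falls to `b`". For a fixed
threshold `b ≤ s`, with `u = r + λ` and `z = (b / s) ^ (2 / σ²) ≤ 1`, one has
`V(λ, b) = K - b z^u + r K (z^u - 1) / u`, which is nondecreasing in `u` because `z^u` decreases and
`(z^u - 1) / u` is a secant slope of the convex function `u ↦ z^u`. On the other hand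
`P(s; λ) = V(λ, min s b*(λ))`, and `b*(λ)` maximizes `V(λ, ·)` by a Bernoulli-type inequality. So
for `λ₁ ≤ λ₂`, with `b₁ = min s b*(λ₁)`,
`P(s; λ₁) = V(λ₁, b₁) ≤ V(λ₂, b₁) ≤ V(λ₂, b*(λ₂)) = P(s; λ₂)` as long as `b*(λ₂) < s`;
otherwise `s ≤ b*(λ₂) ≤ b*(λ₁)` and both prices are `K - s`.
-/

open Real

/-- `θ(λ) = 2(r+λ)/σ²`. -/
noncomputable def perpTheta (r lam sigma : ℝ) : ℝ := 2 * (r + lam) / sigma ^ 2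

/-- Optimal exercise threshold `b*(λ) = 2rK/(2(r+λ) + σ²)`. -/
noncomputable def perpBstar (r lam sigma K : ℝ) : ℝ := 2 * r * K / (2 * (r + lam) + sigma ^ 2)

/-- Market price of a perpetual American put (strike `K`) on a defaultable stock
with constant default intensity `λ`:
`P(s;λ) = K − s` for `0 < s ≤ b*(λ)`, and
`P(s;λ) = (rK/((r+λ)(θ(λ)+1)))·(s/b*(λ))^{−θ(λ)} + λK/(r+λ)` for `s > b*(λ)`. -/
noncomputable def perpPut (r lam sigma K s : ℝ) : ℝ :=
  if s ≤ perpBstar r lam sigma K then K - s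
  else (r * K / ((r + lam) * (perpTheta r lam sigma + 1)))
        * (s / perpBstar r lam sigma K) ^ (-(perpTheta r lam sigma)) + lam * K / (r + lam)

open Set

theorem rpow_mul_one_add_mul_one_sub_le_one {v θ : ℝ} (hv : 0 < v) (hθ : 0 ≤ θ) :
    v ^ θ * (1 + θ * (1 - v)) ≤ 1 := by
  rcases le_or_gt (1 + θ * (1 - v)) 0 with hw | hw
  · exact (mul_nonpos_of_nonneg_of_nonpos (by positivity) hw).trans zero_le_one
  have hlog_v : θ * log v ≤ θ * (v - 1) :=
    mul_le_mul_of_nonneg_left (log_le_sub_one_of_pos hv) hθ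
  have hlog_w := log_le_sub_one_of_pos hw
  calc v ^ θ * (1 + θ * (1 - v)) = exp (θ * log v + log (1 + θ * (1 - v))) := by
        rw [exp_add, exp_log hw, rpow_def_of_pos hv, mul_comm (log v)]
    _ ≤ exp 0 := exp_le_exp.2 (by linarith)
    _ = 1 := exp_zero

theorem sub_mul_rpow_le {m θ b : ℝ} (hm : 0 < m) (hθ : 0 < θ) (hb : 0 < b) :
    (m - b) * b ^ θ ≤ (m - θ * m / (θ + 1)) * (θ * m / (θ + 1)) ^ θ := by
  set β := θ * m / (θ + 1)
  have hβ : 0 < β := by positivity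
  have hbθ : b ^ θ = (b / β) ^ θ * β ^ θ := by
    rw [← mul_rpow (by positivity) hβ.le, div_mul_cancel₀ b hβ.ne']
  have hfactor : m - b = (m - β) * (1 + θ * (1 - b / β)) := by
    simp only [β]; field_simp; ring
  calc (m - b) * b ^ θ = (m - β) * β ^ θ * ((b / β) ^ θ * (1 + θ * (1 - b / β))) := by
        rw [hfactor, hbθ]; ring
    _ ≤ (m - β) * β ^ θ * 1 := by
        have hmβ : 0 < m - β := by simp only [β]; field_simp; linarith
        gcongr
        exact rpow_mul_one_add_mul_one_sub_le_one (by positivity) hθ.le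
    _ = _ := mul_one _

theorem monotoneOn_rpow_sub_one_div {z : ℝ} (hz : 0 < z) :
    MonotoneOn (fun u : ℝ => (z ^ u - 1) / u) (Ioi 0) := by
  intro x hx y hy hxy
  have := (convexOn_rpow_left hz).secant_mono (mem_univ 0) (mem_univ x) (mem_univ y)
    (ne_of_gt hx) (ne_of_gt hy) hxy
  simpa only [rpow_zero, sub_zero] using this

/-- Value of exercising when the price first falls to `b ≤ s`: the put pays `K - b` then and `K` at
default, and `(s / b) ^ (-θ)` is the expected discount `E[e^{-(r+λ)τ_b}]` of the hitting time. -/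
noncomputable def thresholdPutValue (r lam sigma K s b : ℝ) : ℝ :=
  (K - b) * (s / b) ^ (-perpTheta r lam sigma)
    + lam * K / (r + lam) * (1 - (s / b) ^ (-perpTheta r lam sigma))

section

variable {r lam sigma K s b : ℝ}

theorem perpTheta_pos (hu : 0 < r + lam) (hσ : sigma ≠ 0) : 0 < perpTheta r lam sigma := by
  unfold perpTheta; positivity

theorem perpBstar_pos (hr : 0 < r) (hK : 0 < K) (hu : 0 < r + lam) :
    0 < perpBstar r lam sigma K := by
  unfold perpBstar; positivity

theorem perpBstar_strictAntiOn (hr : 0 < r) (hK : 0 < K) :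
    StrictAntiOn (fun lam => perpBstar r lam sigma K) (Ioi (-r)) := by
  intro a ha b _ hab
  have hu : 0 < r + a := by linarith [mem_Ioi.1 ha]
  exact div_lt_div_of_pos_left (by positivity) (by positivity) (by linarith)

theorem perpBstar_eq_perpTheta_mul_div (hu : 0 < r + lam) (hσ : sigma ≠ 0) :
    perpBstar r lam sigma K
      = perpTheta r lam sigma * (r * K / (r + lam)) / (perpTheta r lam sigma + 1) := by
  unfold perpBstar perpTheta
  field_simp

theorem thresholdPutValue_self (hs : s ≠ 0) : thresholdPutValue r lam sigma K s s = K - s := by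
  simp [thresholdPutValue, div_self hs]

theorem thresholdPutValue_eq (hu : r + lam ≠ 0) (hs : 0 < s) (hb : 0 < b) :
    thresholdPutValue r lam sigma K s b = lam * K / (r + lam)
      + (r * K / (r + lam) - b) * b ^ perpTheta r lam sigma / s ^ perpTheta r lam sigma := by
  rw [thresholdPutValue, rpow_neg (div_pos hs hb).le, div_rpow hs.le hb.le, inv_div]
  field_simp
  ring

theorem thresholdPutValue_le_thresholdPutValue_perpBstar (hr : 0 < r) (hK : 0 < K)
    (hu : 0 < r + lam) (hσ : sigma ≠ 0) (hs : 0 < s) (hb : 0 < b) :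
    thresholdPutValue r lam sigma K s b
      ≤ thresholdPutValue r lam sigma K s (perpBstar r lam sigma K) := by
  rw [thresholdPutValue_eq hu.ne' hs hb, thresholdPutValue_eq hu.ne' hs (perpBstar_pos hr hK hu),
    perpBstar_eq_perpTheta_mul_div hu hσ]
  refine add_le_add le_rfl (div_le_div_of_nonneg_right ?_ (by positivity))
  exact sub_mul_rpow_le (by positivity) (perpTheta_pos hu hσ) hb

theorem perpPut_eq_of_perpBstar_lt (hu : 0 < r + lam) (hσ : sigma ≠ 0)
    (h : perpBstar r lam sigma K < s) :
    perpPut r lam sigma K s = thresholdPutValue r lam sigma K s (perpBstar r lam sigma K) := by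
  have hcoef : r * K / ((r + lam) * (perpTheta r lam sigma + 1))
      = K - perpBstar r lam sigma K - lam * K / (r + lam) := by
    unfold perpBstar perpTheta
    field_simp
    ring
  rw [perpPut, if_neg h.not_ge, thresholdPutValue, hcoef]
  ring

theorem perpPut_eq_thresholdPutValue_min (hu : 0 < r + lam) (hσ : sigma ≠ 0) (hs : 0 < s) :
    perpPut r lam sigma K s
      = thresholdPutValue r lam sigma K s (min s (perpBstar r lam sigma K)) := by
  rcases le_or_gt s (perpBstar r lam sigma K) with h | h
  · rw [min_eq_left h, thresholdPutValue_self hs.ne', perpPut, if_pos h]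
  · rw [min_eq_right h.le, perpPut_eq_of_perpBstar_lt hu hσ h]

theorem thresholdPutValue_monotoneOn (hr : 0 ≤ r) (hK : 0 ≤ K) (hb : 0 < b) (hbs : b ≤ s) :
    MonotoneOn (fun lam => thresholdPutValue r lam sigma K s b) (Ioi (-r)) := by
  have hs : 0 < s := hb.trans_le hbs
  set z := (b / s) ^ (2 / sigma ^ 2)
  have hz : 0 < z := by positivity
  have hz1 : z ≤ 1 := rpow_le_one (by positivity) ((div_le_one hs).2 hbs) (by positivity)
  have hform : ∀ lam ∈ Ioi (-r), thresholdPutValue r lam sigma K s b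
      = K - b * z ^ (r + lam) + r * K * ((z ^ (r + lam) - 1) / (r + lam)) := by
    intro lam hlam
    have hu : 0 < r + lam := by linarith [mem_Ioi.1 hlam]
    rw [thresholdPutValue_eq hu.ne' hs hb, mul_div_assoc (r * K / (r + lam) - b),
      ← div_rpow hb.le hs.le, perpTheta,
      show 2 * (r + lam) / sigma ^ 2 = 2 / sigma ^ 2 * (r + lam) by ring,
      rpow_mul (by positivity)]
    field_simp
    ring
  intro l₁ h₁ l₂ h₂ hl
  have hu₁ : 0 < r + l₁ := by linarith [mem_Ioi.1 h₁]
  dsimp only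
  rw [hform l₁ h₁, hform l₂ h₂]
  gcongr K - b * ?_ + r * K * ?_
  · exact rpow_le_rpow_of_exponent_ge hz hz1 (by linarith)
  · exact monotoneOn_rpow_sub_one_div hz hu₁ (mem_Ioi.2 (by linarith)) (by linarith)

end

/-- **Monotonicity in the default intensity.**  For fixed `r > 0`, `σ > 0`,
`K > 0`, the market exercise threshold `λ ↦ b*(λ) = 2rK/(2(r+λ)+σ²)` is strictly
decreasing in `λ` on `[0,∞)`, and for each fixed `s > 0` the perpetual
defaultable put price `λ ↦ P(s;λ)` is nondecreasing in `λ` on `[0,∞)`. -/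
theorem perpPut_monotone_in_intensity
    (r sigma K : ℝ) (hr : 0 < r) (hsigma : 0 < sigma) (hK : 0 < K) :
    StrictAntiOn (fun lam => perpBstar r lam sigma K) (Set.Ici 0)
    ∧ ∀ s ∈ Set.Ioi (0 : ℝ),
        MonotoneOn (fun lam => perpPut r lam sigma K s) (Set.Ici 0) := by
  have hdom : Ici (0 : ℝ) ⊆ Ioi (-r) := Ici_subset_Ioi.2 (neg_neg_of_pos hr)
  have hanti := (perpBstar_strictAntiOn (sigma := sigma) hr hK).mono hdom
  refine ⟨hanti, fun s hs l₁ hl₁ l₂ hl₂ hl => ?_⟩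
  have hu₁ : 0 < r + l₁ := by linarith [mem_Ici.1 hl₁]
  have hu₂ : 0 < r + l₂ := by linarith [mem_Ici.1 hl₂]
  rcases le_or_gt s (perpBstar r l₂ sigma K) with h₂ | h₂
  · have h₁ : s ≤ perpBstar r l₁ sigma K := h₂.trans (hanti.antitoneOn hl₁ hl₂ hl)
    simp only [perpPut, if_pos h₁, if_pos h₂, le_rfl]
  · set b := min s (perpBstar r l₁ sigma K)
    have hb : 0 < b := lt_min hs (perpBstar_pos hr hK hu₁)
    calc perpPut r l₁ sigma K s = thresholdPutValue r l₁ sigma K s b :=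
          perpPut_eq_thresholdPutValue_min hu₁ hsigma.ne' hs
      _ ≤ thresholdPutValue r l₂ sigma K s b :=
          thresholdPutValue_monotoneOn hr.le hK.le hb (min_le_left _ _) (hdom hl₁) (hdom hl₂) hl
      _ ≤ thresholdPutValue r l₂ sigma K s (perpBstar r l₂ sigma K) :=
          thresholdPutValue_le_thresholdPutValue_perpBstar hr hK hu₂ hsigma.ne' hs hb
      _ = perpPut r l₂ sigma K s := (perpPut_eq_of_perpBstar_lt hu₂ hsigma.ne' h₂).symm
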